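/- The ratio of the products of bipartite concurrences of the W and GHZ states satisfies $\frac{\mathcal{P}(|W_n\rangle)}{\mathcal{P}(|\mathrm{GHZ}_n\rangle)} = \prod_{m=1}^{\lfloor n/2 \rfloor} \left(2\sqrt{\frac{m(n-m)}{n^2}}\right)^{k_m}$, where $k_m = \binom{n}{m}$ for $m < n/2$ and $k_{n/2} = \frac12\binom{n}{n/2}$ when $n$ is even. -/

import Mathlib

/-- Multiplicity of the bipartitions of `n` parties whose smaller side has `m`
parties: `n.choose m` for `m < n/2`, and half of that when `n = 2m`. -/
noncomputable def kExp (n m : ℕ) : ℝ :=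
  if 2 * m = n then (n.choose m : ℝ) / 2 else (n.choose m : ℝ)

/-- Total number of bipartitions of `n` parties. -/
noncomputable def cAlpha (n : ℕ) : ℝ := ∑ m ∈ Finset.Icc 1 (n / 2), kExp n m

/-- Closed form for the GHZ-state bipartite concurrence across a bipartition
whose smaller side has `m` qubits. -/
noncomputable def ghzConc (m : ℕ) : ℝ := Real.sqrt ((2:ℝ)^m / (2 * ((2:ℝ)^m - 1)))

/-- Closed form for the W-state bipartite concurrence across a bipartition
whose smaller side has `m` qubits. -/
noncomputable def wConc (n m : ℕ) : ℝ :=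
  Real.sqrt ((2:ℝ)^(m+1) * m * ((n:ℝ) - m) / (((2:ℝ)^m - 1) * (n:ℝ)^2))

/-- Product of all bipartite concurrences of the `n`-qubit GHZ state. -/
noncomputable def ghzProd (n : ℕ) : ℝ :=
  ∏ m ∈ Finset.Icc 1 (n / 2), (ghzConc m) ^ (kExp n m)

/-- Product of all bipartite concurrences of the `n`-qubit W state. -/
noncomputable def wProd (n : ℕ) : ℝ :=
  ∏ m ∈ Finset.Icc 1 (n / 2), (wConc n m) ^ (kExp n m)

/-- The GBC of the `n`-qubit GHZ state (closed form). -/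
noncomputable def ghzGBC (n : ℕ) : ℝ := (ghzProd n) ^ (1 / cAlpha n)

/-- The GBC of the `n`-qubit W state (closed form). -/
noncomputable def wGBC (n : ℕ) : ℝ := (wProd n) ^ (1 / cAlpha n)

/-! The closed forms share the factor `(2^m - 1)⁻¹`: the squared ratio of the W and GHZ
concurrences across a cut with `m` qubits on the smaller side is `4 m (n - m) / n²`, independent
of `2^m`, so the ratio of the products is the product of the ratios. -/

open Real

lemma ghzConc_radicand_pos {m : ℕ} (hm : 0 < m) : 0 < (2 : ℝ) ^ m / (2 * (2 ^ m - 1)) := by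
  have h2m : (1 : ℝ) < 2 ^ m := one_lt_pow₀ one_lt_two hm.ne'
  rw [div_pos_iff_of_pos_left (by positivity)]
  linarith

lemma ghzConc_pos {m : ℕ} (hm : 0 < m) : 0 < ghzConc m :=
  sqrt_pos.2 (ghzConc_radicand_pos hm)

lemma wConc_nonneg (n m : ℕ) : 0 ≤ wConc n m := sqrt_nonneg _

lemma wConc_eq_mul_ghzConc (n m : ℕ) :
    wConc n m = 2 * √((m : ℝ) * (n - m) / n ^ 2) * ghzConc m := by
  rcases Nat.eq_zero_or_pos m with rfl | hm
  · simp [wConc]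
  have h_two : 2 * √((m : ℝ) * (n - m) / n ^ 2) = √(4 * ((m : ℝ) * (n - m) / n ^ 2)) := by
    rw [sqrt_mul zero_le_four, show (4 : ℝ) = 2 ^ 2 by norm_num, sqrt_sq zero_le_two]
  rw [h_two, ghzConc, ← sqrt_mul' _ (ghzConc_radicand_pos hm).le, wConc]
  congr 1
  simp only [div_eq_mul_inv, mul_inv]
  ring

lemma wConc_div_ghzConc (n : ℕ) {m : ℕ} (hm : 0 < m) :
    wConc n m / ghzConc m = 2 * √((m : ℝ) * (n - m) / n ^ 2) := by
  rw [wConc_eq_mul_ghzConc, mul_div_cancel_right₀ _ (ghzConc_pos hm).ne']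

/-- The ratio of the products of bipartite concurrences of the W and GHZ states
equals `∏_{m=1}^{⌊n/2⌋} (2 √(m(n-m)/n²))^{k_m}`. -/
theorem wProd_div_ghzProd (n : ℕ) :
    wProd n / ghzProd n
      = ∏ m ∈ Finset.Icc 1 (n / 2),
          (2 * Real.sqrt ((m:ℝ) * ((n:ℝ) - m) / (n:ℝ)^2)) ^ (kExp n m) := by
  rw [wProd, ghzProd, ← Finset.prod_div_distrib]
  refine Finset.prod_congr rfl fun m hm => ?_
  have hm_pos : 0 < m := (Finset.mem_Icc.1 hm).1
  rw [← div_rpow (wConc_nonneg n m) (ghzConc_pos hm_pos).le, wConc_div_ghzConc n hm_pos]
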